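/- Let $n \geq 3$, $\sigma_1, \ldots, \sigma_n > 0$, and $q_k^\pm \in (0,1)$ with $q_k^- + q_{k+1}^+ = 1$. Let $\mathcal{A}$ be the tridiagonal matrix with $\mathcal{A}_{kk} = \sigma_k^2 + \sigma_{k+1}^2$, $\mathcal{A}_{k,k+1} = \mathcal{A}_{k+1,k} = -\sigma_{k+1}^2$, and $\mathcal{Q}$ the tridiagonal matrix with zero diagonal, $\mathcal{Q}_{k,k+1} = q_{k+1}^-$, $\mathcal{Q}_{k+1,k} = q_{k+1}^+$. Then all off-diagonal entries of $\mathcal{A}^{-1}(I - \mathcal{Q})$ are nonnegative if and only if for all $k = 2, \ldots, n-1$: $(1-q_k^-)\sigma_k^2 \geq q_k^- \sigma_{k+1}^2$ and $(1-q_k^+)\sigma_k^2 \geq q_k^+ \sigma_{k-1}^2$. -/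

import Mathlib

/-!
With `c k = σ k ^ 2`, `A` is the Dirichlet Laplacian of the path `0, 1, …, n` carrying
conductance `c k` on the edge `(k - 1, k)`. Its inverse is the Green's function
`G(a, b) = R (min a b) * (R n - R (max a b)) / R n`, where `R t = ∑_{k=1}^t (c k)⁻¹` is the
resistance from `0` to `t`; `G(a, ·)` is affine in `R` on either side of `a` and vanishes at both
ends of the path, so boundary rows and columns need no separate treatment.

By the elasticity relation, column `k` of `I - Q` is `e_k - q e_{k-1} - (1 - q) e_{k+1}` with
`q = q⁻_k = 1 - q⁺_{k+1}`. Against row `i` of `G` only the two increments of `G(i, ·)` next to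
`k` survive: for `i < k` the entry is `R i / R n * ((1 - q) / c (k + 1) - q / c k)`, and for
`i > k` it is the mirror image with the positive factor `(R n - R i) / R n`. The sign of each
bracket is one inequality of condition (A).
-/

open Finset

def tridiag {R : Type*} [Zero R] (N : ℕ) (l d u : ℕ → R) : Matrix (Fin N) (Fin N) R :=
  Matrix.of fun i j =>
    if (j : ℕ) = i then d i else if (j : ℕ) = i + 1 then u i
    else if (i : ℕ) = j + 1 then l i else 0

theorem sum_tridiag_mul {R : Type*} [Semiring R] {N : ℕ} (l d u x : ℕ → R)
    (hx₀ : x 0 = 0) (hxN : x (N + 1) = 0) (i : Fin N) :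
    ∑ j, tridiag N l d u i j * x (j + 1) =
      l i * x i + d i * x (i + 1) + u i * x (i + 2) := by
  have hsplit : ∀ j : ℕ, (if j = i then d i else if j = i + 1 then u i
      else if (i : ℕ) = j + 1 then l i else 0) * x (j + 1) =
      (if j + 1 = i then l i * x i else 0) + (if j = i then d i * x (i + 1) else 0) +
        (if j = i + 1 then u i * x (i + 2) else 0) := by
    intro j
    split_ifs <;> grind
  have hlower : ∑ j ∈ range N, (if j + 1 = i then l i * x i else 0) = l i * x i := by
    obtain ⟨_ | k, hk⟩ := i
    · simp [hx₀]
    · simp only [Nat.add_right_cancel_iff, sum_ite_eq', mem_range]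
      exact if_pos (by omega)
  have hupper : (if (i : ℕ) + 1 ∈ range N then u i * x (i + 2) else 0) = u i * x (i + 2) := by
    by_cases h : (i : ℕ) + 1 < N
    · exact if_pos (mem_range.2 h)
    · rw [if_neg (by simpa using h), show (i : ℕ) + 2 = N + 1 by omega, hxN, mul_zero]
  simp only [tridiag, Matrix.of_apply]
  rw [Fin.sum_univ_eq_sum_range (fun j => (if j = i then d i else if j = i + 1 then u i
      else if (i : ℕ) = j + 1 then l i else 0) * x (j + 1)),
    sum_congr rfl (fun j _ => hsplit j),
    sum_add_distrib, sum_add_distrib, sum_ite_eq', sum_ite_eq', if_pos (mem_range.2 i.2),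
    hlower, hupper]

noncomputable def pathResistance (c : ℕ → ℝ) (t : ℕ) : ℝ :=
  ∑ k ∈ range t, (c (k + 1))⁻¹

noncomputable def pathGreen (c : ℕ → ℝ) (N a b : ℕ) : ℝ :=
  pathResistance c (min a b) * (pathResistance c (N + 1) - pathResistance c (max a b)) /
    pathResistance c (N + 1)

noncomputable def pathLaplacian (c : ℕ → ℝ) (N : ℕ) : Matrix (Fin N) (Fin N) ℝ :=
  tridiag N (fun i => -c (i + 1)) (fun i => c (i + 1) + c (i + 2)) (fun i => -c (i + 2))

noncomputable def greenMatrix (c : ℕ → ℝ) (N : ℕ) : Matrix (Fin N) (Fin N) ℝ :=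
  Matrix.of fun a b => pathGreen c N (a + 1) (b + 1)

section Resistance

variable (c : ℕ → ℝ)

theorem pathResistance_zero : pathResistance c 0 = 0 := sum_range_zero _

theorem pathResistance_succ (t : ℕ) :
    pathResistance c (t + 1) = pathResistance c t + (c (t + 1))⁻¹ :=
  sum_range_succ _ _

variable {c}

theorem pathResistance_lt {a b : ℕ} (hc : ∀ k, 1 ≤ k → k ≤ b → 0 < c k) (hab : a < b) :
    pathResistance c a < pathResistance c b := by
  apply sum_lt_sum_of_subset (range_subset_range.2 hab.le) (mem_range.2 hab) notMem_range_self
  · exact inv_pos.2 (hc (a + 1) (by omega) (by omega))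
  · intro k hk _
    exact (inv_pos.2 (hc (k + 1) (by omega) (by simp at hk; omega))).le

theorem pathResistance_pos {t : ℕ} (hc : ∀ k, 1 ≤ k → k ≤ t → 0 < c k) (ht : 0 < t) :
    0 < pathResistance c t :=
  pathResistance_zero c ▸ pathResistance_lt hc ht

end Resistance

section Green

variable (c : ℕ → ℝ) (N : ℕ)

theorem pathGreen_comm (a b : ℕ) : pathGreen c N a b = pathGreen c N b a := by
  rw [pathGreen, pathGreen, min_comm, max_comm]

theorem pathGreen_zero_left (b : ℕ) : pathGreen c N 0 b = 0 := by
  simp [pathGreen, pathResistance_zero]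

theorem pathGreen_end_left {b : ℕ} (hb : b ≤ N + 1) : pathGreen c N (N + 1) b = 0 := by
  simp [pathGreen, max_eq_left hb]

theorem pathGreen_succ_sub (a b : ℕ) :
    pathGreen c N (a + 1) b - pathGreen c N a b = (c (a + 1))⁻¹ *
      if a < b then (pathResistance c (N + 1) - pathResistance c b) / pathResistance c (N + 1)
      else -(pathResistance c b / pathResistance c (N + 1)) := by
  unfold pathGreen
  split_ifs with h
  · rw [min_eq_left (by omega : a + 1 ≤ b), min_eq_left h.le,
      max_eq_right (by omega : a + 1 ≤ b), max_eq_right h.le, pathResistance_succ c a]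
    ring
  · rw [min_eq_right (by omega : b ≤ a + 1), min_eq_right (by omega : b ≤ a),
      max_eq_left (by omega : b ≤ a + 1), max_eq_left (by omega : b ≤ a),
      pathResistance_succ c a]
    ring

theorem pathGreen_laplacian {a : ℕ} (b : ℕ) (h₁ : c (a + 1) ≠ 0) (h₂ : c (a + 2) ≠ 0)
    (hW : pathResistance c (N + 1) ≠ 0) :
    -c (a + 1) * pathGreen c N a b + (c (a + 1) + c (a + 2)) * pathGreen c N (a + 1) b +
      -c (a + 2) * pathGreen c N (a + 2) b = if a + 1 = b then 1 else 0 := by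
  have flux := pathGreen_succ_sub c N
  calc _ = c (a + 1) * (pathGreen c N (a + 1) b - pathGreen c N a b) -
        c (a + 2) * (pathGreen c N (a + 1 + 1) b - pathGreen c N (a + 1) b) := by ring
    _ = _ := by
      rw [flux, flux, ← mul_assoc, ← mul_assoc, mul_inv_cancel₀ h₁, mul_inv_cancel₀ h₂]
      split_ifs <;> first | omega | (field_simp; ring)

end Green

section Matrix

variable {c : ℕ → ℝ} {N : ℕ}

theorem pathLaplacian_mul_greenMatrix (hc : ∀ k, 1 ≤ k → k ≤ N + 1 → c k ≠ 0)
    (hW : pathResistance c (N + 1) ≠ 0) : pathLaplacian c N * greenMatrix c N = 1 := by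
  ext i k
  rw [Matrix.mul_apply, Matrix.one_apply]
  refine (sum_tridiag_mul _ _ _ (fun a => pathGreen c N a (k + 1)) (pathGreen_zero_left c N _)
    (pathGreen_end_left c N (by omega)) i).trans ?_
  rw [pathGreen_laplacian c N _ (hc _ (by omega) (by omega)) (hc _ (by omega) (by omega)) hW]
  simp [Fin.ext_iff]

theorem inv_pathLaplacian (hc : ∀ k, 1 ≤ k → k ≤ N + 1 → c k ≠ 0)
    (hW : pathResistance c (N + 1) ≠ 0) : (pathLaplacian c N)⁻¹ = greenMatrix c N :=
  Matrix.inv_eq_right_inv (pathLaplacian_mul_greenMatrix hc hW)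

theorem greenMatrix_mul_apply {M : Matrix (Fin N) (Fin N) ℝ} {l u : ℕ → ℝ} {j : Fin N}
    (hM : ∀ k, M k j = tridiag N l 1 u j k) (i : Fin N) :
    (greenMatrix c N * M) i j = l j * pathGreen c N (i + 1) j +
      pathGreen c N (i + 1) (j + 1) + u j * pathGreen c N (i + 1) (j + 2) := by
  rw [Matrix.mul_apply]
  simp_rw [hM, mul_comm (greenMatrix c N i _)]
  refine (sum_tridiag_mul l 1 u (fun b => pathGreen c N (i + 1) b)
    (by rw [pathGreen_comm, pathGreen_zero_left]) ?_ j).trans ?_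
  · rw [pathGreen_comm, pathGreen_end_left c N (by omega)]
  · simp

end Matrix

section Columns

variable (c : ℕ → ℝ) (N : ℕ) {a j : ℕ}

theorem pathGreen_column_of_le (q : ℝ) (h : a ≤ j) :
    -q * pathGreen c N a j + pathGreen c N a (j + 1) + (q - 1) * pathGreen c N a (j + 2) =
      pathResistance c a / pathResistance c (N + 1) *
        ((1 - q) * (c (j + 2))⁻¹ - q * (c (j + 1))⁻¹) := by
  have h₁ := pathGreen_succ_sub c N j a
  have h₂ := pathGreen_succ_sub c N (j + 1) a
  rw [if_neg (by omega)] at h₁ h₂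
  rw [pathGreen_comm c N a j, pathGreen_comm c N a (j + 1), pathGreen_comm c N a (j + 2)]
  linear_combination q * h₁ - (1 - q) * h₂

theorem pathGreen_column_of_lt (p : ℝ) (h : j + 1 < a) :
    (p - 1) * pathGreen c N a j + pathGreen c N a (j + 1) + -p * pathGreen c N a (j + 2) =
      (pathResistance c (N + 1) - pathResistance c a) / pathResistance c (N + 1) *
        ((1 - p) * (c (j + 1))⁻¹ - p * (c (j + 2))⁻¹) := by
  have h₁ := pathGreen_succ_sub c N j a
  have h₂ := pathGreen_succ_sub c N (j + 1) a
  rw [if_pos (by omega)] at h₁ h₂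
  rw [pathGreen_comm c N a j, pathGreen_comm c N a (j + 1), pathGreen_comm c N a (j + 2)]
  linear_combination (1 - p) * h₁ - p * h₂

end Columns

theorem mul_inv_sub_mul_inv_nonneg_iff {x y a b : ℝ} (hx : 0 < x) (hy : 0 < y) :
    0 ≤ a * y⁻¹ - b * x⁻¹ ↔ b * y ≤ a * x := by
  rw [show a * y⁻¹ - b * x⁻¹ = (a * x - b * y) / (x * y) by field_simp,
    le_div_iff₀ (by positivity), zero_mul, sub_nonneg]

section Sign

variable {c : ℕ → ℝ} {N : ℕ} {M : Matrix (Fin N) (Fin N) ℝ}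

theorem greenMatrix_mul_apply_nonneg_iff_of_lt (hc : ∀ k, 1 ≤ k → k ≤ N + 1 → 0 < c k)
    {q : ℝ} {i j : Fin N}
    (hM : ∀ k, M k j = tridiag N (fun _ => -q) 1 (fun _ => q - 1) j k) (hij : i < j) :
    0 ≤ (greenMatrix c N * M) i j ↔ q * c (j + 2) ≤ (1 - q) * c (j + 1) := by
  have hj := j.2
  rw [greenMatrix_mul_apply hM, pathGreen_column_of_le c N q (by omega : (i : ℕ) + 1 ≤ j),
    mul_nonneg_iff_of_pos_left (div_pos
      (pathResistance_pos (fun k h₁ h₂ => hc k h₁ (by omega)) (by omega))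
      (pathResistance_pos hc (by omega))),
    mul_inv_sub_mul_inv_nonneg_iff (hc _ (by omega) (by omega)) (hc _ (by omega) (by omega))]

theorem greenMatrix_mul_apply_nonneg_iff_of_gt (hc : ∀ k, 1 ≤ k → k ≤ N + 1 → 0 < c k)
    {p : ℝ} {i j : Fin N}
    (hM : ∀ k, M k j = tridiag N (fun _ => p - 1) 1 (fun _ => -p) j k) (hij : j < i) :
    0 ≤ (greenMatrix c N * M) i j ↔ p * c (j + 1) ≤ (1 - p) * c (j + 2) := by
  have hi := i.2
  rw [greenMatrix_mul_apply hM, pathGreen_column_of_lt c N p (by omega : (j : ℕ) + 1 < i + 1),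
    mul_nonneg_iff_of_pos_left (div_pos (sub_pos.2 (pathResistance_lt hc (by omega)))
      (pathResistance_pos hc (by omega))),
    mul_inv_sub_mul_inv_nonneg_iff (hc _ (by omega) (by omega)) (hc _ (by omega) (by omega))]

end Sign

section Reflection

variable {N : ℕ} {qm qp : ℕ → ℝ} {Q : Matrix (Fin N) (Fin N) ℝ}

theorem one_sub_apply_eq_tridiag_qm (hQ : ∀ i j : Fin N, Q i j =
      if (j : ℕ) = (i : ℕ) + 1 then qm ((i : ℕ) + 2)
      else if (i : ℕ) = (j : ℕ) + 1 then qp ((i : ℕ) + 1) else 0)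
    {j : Fin N} (hq : (j : ℕ) + 1 < N → qm (j + 1) + qp (j + 2) = 1) (k : Fin N) :
    (1 - Q) k j = tridiag N (fun _ => -qm (j + 1)) 1 (fun _ => qm (j + 1) - 1) j k := by
  rw [Matrix.sub_apply, hQ, Matrix.one_apply, tridiag, Matrix.of_apply]
  simp only [Fin.ext_iff, Pi.one_apply]
  split_ifs <;> grind

theorem one_sub_apply_eq_tridiag_qp (hQ : ∀ i j : Fin N, Q i j =
      if (j : ℕ) = (i : ℕ) + 1 then qm ((i : ℕ) + 2)
      else if (i : ℕ) = (j : ℕ) + 1 then qp ((i : ℕ) + 1) else 0)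
    {j : Fin N} (hq : 1 ≤ (j : ℕ) → qm (j + 1) + qp (j + 2) = 1) (k : Fin N) :
    (1 - Q) k j = tridiag N (fun _ => qp (j + 2) - 1) 1 (fun _ => -qp (j + 2)) j k := by
  rw [Matrix.sub_apply, hQ, Matrix.one_apply, tridiag, Matrix.of_apply]
  simp only [Fin.ext_iff, Pi.one_apply]
  split_ifs <;> grind

end Reflection

theorem condA_equiv_general
    (m : ℕ) (σ qm qp : ℕ → ℝ)
    (hσ : ∀ k, 1 ≤ k → k ≤ m + 3 → 0 < σ k)
    (helastic : ∀ k, 2 ≤ k → k + 1 ≤ m + 2 → qm k + qp (k + 1) = 1)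
    (A Q : Matrix (Fin (m + 2)) (Fin (m + 2)) ℝ)
    (hA : ∀ i j : Fin (m + 2), A i j =
      if i = j then σ ((i : ℕ) + 1) ^ 2 + σ ((i : ℕ) + 2) ^ 2
      else if (j : ℕ) = (i : ℕ) + 1 then -(σ ((i : ℕ) + 2)) ^ 2
      else if (i : ℕ) = (j : ℕ) + 1 then -(σ ((i : ℕ) + 1)) ^ 2
      else 0)
    (hQ : ∀ i j : Fin (m + 2), Q i j =
      if (j : ℕ) = (i : ℕ) + 1 then qm ((i : ℕ) + 2)
      else if (i : ℕ) = (j : ℕ) + 1 then qp ((i : ℕ) + 1) else 0) :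
    (∀ i j : Fin (m + 2), i ≠ j → 0 ≤ (A⁻¹ * (1 - Q)) i j) ↔
      (∀ k, 2 ≤ k → k ≤ m + 2 →
        qm k * σ (k + 1) ^ 2 ≤ (1 - qm k) * σ k ^ 2 ∧
        qp k * σ (k - 1) ^ 2 ≤ (1 - qp k) * σ k ^ 2) := by
  set c : ℕ → ℝ := fun k => σ k ^ 2
  have hc : ∀ k, 1 ≤ k → k ≤ m + 3 → 0 < c k := fun k h₁ h₂ =>
    pow_pos (hσ k h₁ h₂) _
  have hA' : A = pathLaplacian c (m + 2) := by
    ext i j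
    rw [hA, pathLaplacian, tridiag, Matrix.of_apply]
    simp only [Fin.ext_iff]
    split_ifs <;> first | omega | rfl
  have hcolm : ∀ j : Fin (m + 2), 1 ≤ (j : ℕ) → ∀ k, (1 - Q) k j =
      tridiag (m + 2) (fun _ => -qm (j + 1)) 1 (fun _ => qm (j + 1) - 1) j k := fun j hj =>
    one_sub_apply_eq_tridiag_qm hQ fun _ => helastic _ (by omega) (by omega)
  have hcolp : ∀ j : Fin (m + 2), (j : ℕ) ≤ m → ∀ k, (1 - Q) k j =
      tridiag (m + 2) (fun _ => qp (j + 2) - 1) 1 (fun _ => -qp (j + 2)) j k := fun j hj =>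
    one_sub_apply_eq_tridiag_qp hQ fun _ => helastic _ (by omega) (by omega)
  rw [hA', inv_pathLaplacian (fun k h₁ h₂ => (hc k h₁ h₂).ne')
    (pathResistance_pos hc (by omega)).ne']
  constructor
  · intro h k hk₂ hk
    obtain ⟨j, rfl⟩ : ∃ j, k = j + 2 := ⟨k - 2, by omega⟩
    exact ⟨(greenMatrix_mul_apply_nonneg_iff_of_lt hc (i := ⟨0, by omega⟩)
        (hcolm ⟨j + 1, by omega⟩ (by simp)) (Fin.mk_lt_mk.2 (by omega))).1
          (h _ _ (by simp [Fin.ext_iff])),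
      (greenMatrix_mul_apply_nonneg_iff_of_gt hc (i := Fin.last _)
        (hcolp ⟨j, by omega⟩ (by simp; omega)) (Fin.mk_lt_mk.2 (by omega))).1
          (h _ _ (by simp [Fin.ext_iff]; omega))⟩
  · intro h i j hij
    rcases lt_or_gt_of_ne hij with hlt | hgt
    · exact (greenMatrix_mul_apply_nonneg_iff_of_lt hc (hcolm j (by omega)) hlt).2
        (h (j + 1) (by omega) (by omega)).1
    · exact (greenMatrix_mul_apply_nonneg_iff_of_gt hc (hcolp j (by omega)) hgt).2
        (h (j + 2) (by omega) (by omega)).2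

/-- Lemma 3 of the paper (here `n = m + 3`): all off-diagonal entries of `A⁻¹(I - Q)` are
nonnegative iff condition (A) holds. -/
theorem condA_equiv
    (m : ℕ) (σ qm qp : ℕ → ℝ)
    (hσ : ∀ k, 1 ≤ k → k ≤ m + 3 → 0 < σ k)
    (hq : ∀ k, 2 ≤ k → k ≤ m + 2 → qm k ∈ Set.Ioo (0 : ℝ) 1 ∧ qp k ∈ Set.Ioo (0 : ℝ) 1)
    (helastic : ∀ k, 2 ≤ k → k + 1 ≤ m + 2 → qm k + qp (k + 1) = 1)
    (A Q : Matrix (Fin (m + 2)) (Fin (m + 2)) ℝ)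
    (hA : ∀ i j : Fin (m + 2), A i j =
      if i = j then σ ((i : ℕ) + 1) ^ 2 + σ ((i : ℕ) + 2) ^ 2
      else if (j : ℕ) = (i : ℕ) + 1 then -(σ ((i : ℕ) + 2)) ^ 2
      else if (i : ℕ) = (j : ℕ) + 1 then -(σ ((i : ℕ) + 1)) ^ 2
      else 0)
    (hQ : ∀ i j : Fin (m + 2), Q i j =
      if (j : ℕ) = (i : ℕ) + 1 then qm ((i : ℕ) + 2)
      else if (i : ℕ) = (j : ℕ) + 1 then qp ((i : ℕ) + 1) else 0) :
    (∀ i j : Fin (m + 2), i ≠ j → 0 ≤ (A⁻¹ * (1 - Q)) i j) ↔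
      (∀ k, 2 ≤ k → k ≤ m + 2 →
        qm k * σ (k + 1) ^ 2 ≤ (1 - qm k) * σ k ^ 2 ∧
        qp k * σ (k - 1) ^ 2 ≤ (1 - qp k) * σ k ^ 2) :=
  condA_equiv_general m σ qm qp hσ helastic A Q hA hQ
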